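/- Let n, d be positive integers. For all real n × d matrices X and Y, one has min_{Q ∈ O(n)} ‖X − QY‖_F ≤ ‖√(XᵀX) − √(YᵀY)‖_F ≤ √2 · min_{Q ∈ O(n)} ‖X − QY‖_F, where O(n) is the group of n × n real orthogonal matrices and ‖·‖_F is the Frobenius norm. -/

import Mathlib

open scoped BigOperators
open Matrix

noncomputable def mnorm {p q : ℕ} (A : Matrix (Fin p) (Fin q) ℝ) : ℝ :=
  Real.sqrt (∑ i, ∑ j, (A i j) ^ 2)

/-- The positive semidefinite square root `√(XᵀX)` of the Gram matrix. -/
noncomputable def gramSqrt {n d : ℕ} (X : Matrix (Fin n) (Fin d) ℝ) :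
    Matrix (Fin d) (Fin d) ℝ :=
  (Matrix.posSemidef_conjTranspose_mul_self X).1.eigenvectorUnitary.1 *
    diagonal ((↑) ∘ (√·) ∘ (Matrix.posSemidef_conjTranspose_mul_self X).1.eigenvalues) *
    (star (Matrix.posSemidef_conjTranspose_mul_self X).1.eigenvectorUnitary : Matrix (Fin d) (Fin d) ℝ)

/-!
Write `P = √(XᵀX)` and `R = √(YᵀY)`. As `‖X‖_F² = ‖P‖_F² = tr P²` and
`‖QY‖_F² = ‖R‖_F² = tr R²`, expanding the squares turns both inequalities into comparisons of
the cross terms `tr(Xᵀ Q Y)` and `tr(P R)`.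

By Douglas' lemma `X = A P` and `Q Y = B R` with contractions `A`, `B`. Applying AM–GM twice,
once through the square roots `√P`, `√R` and once to `tr(B R Bᵀ · A P Aᵀ)`, gives
`4 tr(Xᵀ Q Y) ≤ tr P² + tr R² + 2 tr(P R)`, which is the upper bound.

For the lower bound, the orthogonal factor `Q` of a polar decomposition of `Y Xᵀ` maximises
`tr(C Y Xᵀ)` over all contractions `C`. Since `A` is isometric on the range of `P`, `AᵀA P = P`,
and Douglas' lemma gives a contraction `C` with `C Y = A R`, for which `tr(C Y Xᵀ) = tr(P R)`.
-/

open scoped MatrixOrder InnerProductSpace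

namespace LinearMap

variable {R V W U : Type*} [Ring R] [AddCommGroup V] [Module R V] [AddCommGroup W] [Module R W]
  [AddCommGroup U] [Module R U]

noncomputable def liftRange (a : V →ₗ[R] W) (b : V →ₗ[R] U) (h : ker a ≤ ker b) :
    range a →ₗ[R] U :=
  (ker a).liftQ b h ∘ₗ a.quotKerEquivRange.symm.toLinearMap

lemma liftRange_apply {a : V →ₗ[R] W} {b : V →ₗ[R] U} {h : ker a ≤ ker b} {w : range a} {v : V}
    (hv : a v = w) : liftRange a b h w = b v := by
  obtain ⟨_, _⟩ := w
  subst hv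
  simp [liftRange]

end LinearMap

namespace Matrix

variable {k m n : Type*} [Fintype m] [Fintype n]

section Contraction

variable [Fintype k] [DecidableEq k] [DecidableEq m] [DecidableEq n]

lemma inner_toEuclideanLin_conjTranspose_mul_self (A : Matrix m n ℝ) (x : EuclideanSpace ℝ n) :
    ⟪toEuclideanLin (Aᴴ * A) x, x⟫_ℝ = ‖toEuclideanLin A x‖ ^ 2 := by
  rw [toLpLin_mul_same, LinearMap.comp_apply, toEuclideanLin_conjTranspose_eq_adjoint,
    LinearMap.adjoint_inner_left, real_inner_self_eq_norm_sq]

lemma conjTranspose_mul_self_le_iff {A : Matrix m n ℝ} {B : Matrix k n ℝ} :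
    Bᴴ * B ≤ Aᴴ * A ↔ ∀ x, ‖toEuclideanLin B x‖ ≤ ‖toEuclideanLin A x‖ := by
  rw [le_iff, ← isPositive_toEuclideanLin_iff, LinearMap.isPositive_iff,
    isSymmetric_toEuclideanLin_iff]
  simp only [map_sub, LinearMap.sub_apply, inner_sub_left,
    inner_toEuclideanLin_conjTranspose_mul_self, sub_nonneg,
    sq_le_sq₀ (norm_nonneg _) (norm_nonneg _)]
  exact and_iff_right
    ((isHermitian_conjTranspose_mul_self A).sub (isHermitian_conjTranspose_mul_self B))

lemma ker_toEuclideanLin_le {A : Matrix m k ℝ} {B : Matrix n k ℝ} (h : Bᴴ * B ≤ Aᴴ * A) :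
    LinearMap.ker (toEuclideanLin A) ≤ LinearMap.ker (toEuclideanLin B) :=
  fun v hv => norm_le_zero_iff.mp <| (conjTranspose_mul_self_le_iff.mp h v).trans_eq <| by
    rw [LinearMap.mem_ker.mp hv, norm_zero]

/-- Douglas' lemma. -/
theorem exists_contraction_mul_eq {A : Matrix m k ℝ} {B : Matrix n k ℝ} (h : Bᴴ * B ≤ Aᴴ * A) :
    ∃ C : Matrix n m ℝ, Cᴴ * C ≤ 1 ∧ C * A = B := by
  let a := toEuclideanLin A
  let P := (LinearMap.range a).orthogonalProjectionOnto
  let L := LinearMap.liftRange a (toEuclideanLin B) (ker_toEuclideanLin_le h)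
  refine ⟨toEuclideanLin.symm (L ∘ₗ P.toLinearMap), ?_, toEuclideanLin.injective ?_⟩
  · simpa using conjTranspose_mul_self_le_iff (A := (1 : Matrix m m ℝ)).mpr fun x => by
      rw [LinearEquiv.apply_symm_apply, toLpLin_one, LinearMap.id_apply]
      obtain ⟨v, hv⟩ := (P x).2
      calc ‖L (P x)‖ = ‖toEuclideanLin B v‖ := by rw [LinearMap.liftRange_apply hv]
        _ ≤ ‖a v‖ := conjTranspose_mul_self_le_iff.mp h v
        _ ≤ ‖x‖ := hv ▸ (LinearMap.range a).norm_orthogonalProjectionOnto_apply_le x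
  · ext1 v
    rw [toLpLin_mul_same, LinearEquiv.apply_symm_apply]
    exact LinearMap.liftRange_apply (h := ker_toEuclideanLin_le h) (congrArg Subtype.val
      ((LinearMap.range a).orthogonalProjectionOnto_mem_subspace_eq_self
        ⟨a v, LinearMap.mem_range_self a v⟩)).symm

lemma toEuclideanLin_symm_mem_orthogonalGroup (U : EuclideanSpace ℝ n →ₗᵢ[ℝ] EuclideanSpace ℝ n) :
    toEuclideanLin.symm U.toLinearMap ∈ orthogonalGroup n ℝ := by
  rw [mem_orthogonalGroup_iff', ← conjTranspose_eq_transpose_of_trivial]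
  apply toEuclideanLin.injective
  rw [toLpLin_mul_same, toEuclideanLin_conjTranspose_eq_adjoint, LinearEquiv.apply_symm_apply,
    U.adjoint_comp_self', toLpLin_one]

theorem exists_mem_orthogonalGroup_mul_eq {A B : Matrix n k ℝ} (h : Aᴴ * A = Bᴴ * B) :
    ∃ Q ∈ orthogonalGroup n ℝ, Q * A = B := by
  let a := toEuclideanLin A
  let L := LinearMap.liftRange a (toEuclideanLin B) (ker_toEuclideanLin_le h.ge)
  have hL : ∀ w, ‖L w‖ = ‖w‖ := by
    rintro ⟨_, v, rfl⟩
    rw [LinearMap.liftRange_apply rfl]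
    exact le_antisymm (conjTranspose_mul_self_le_iff.mp h.ge v)
      (conjTranspose_mul_self_le_iff.mp h.le v)
  let U := (LinearIsometry.mk L hL).extend
  refine ⟨toEuclideanLin.symm U.toLinearMap, toEuclideanLin_symm_mem_orthogonalGroup U,
    toEuclideanLin.injective ?_⟩
  ext1 v
  rw [toLpLin_mul_same, LinearEquiv.apply_symm_apply, LinearMap.comp_apply]
  exact ((LinearIsometry.mk L hL).extend_apply ⟨a v, LinearMap.mem_range_self a v⟩).trans
    (LinearMap.liftRange_apply rfl)

end Contraction

section Trace

lemma trace_conjTranspose_mul_comm (A B : Matrix m n ℝ) : (Bᴴ * A).trace = (Aᴴ * B).trace := by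
  simpa using trace_conjTranspose (Aᴴ * B)

lemma trace_conjTranspose_sub_mul_sub (A B : Matrix m n ℝ) :
    ((A - B)ᴴ * (A - B)).trace = (Aᴴ * A).trace + (Bᴴ * B).trace - 2 * (Aᴴ * B).trace := by
  simp only [conjTranspose_sub, Matrix.sub_mul, Matrix.mul_sub, trace_sub,
    trace_conjTranspose_mul_comm A B]
  ring

lemma two_mul_trace_conjTranspose_mul_le (A B : Matrix m n ℝ) :
    2 * (Aᴴ * B).trace ≤ (Aᴴ * A).trace + (Bᴴ * B).trace := by
  have := (posSemidef_conjTranspose_mul_self (A - B)).trace_nonneg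
  rw [trace_conjTranspose_sub_mul_sub] at this
  linarith

lemma IsHermitian.two_mul_trace_mul_le {M N : Matrix n n ℝ} (hM : M.IsHermitian)
    (hN : N.IsHermitian) : 2 * (M * N).trace ≤ (M * M).trace + (N * N).trace := by
  simpa only [hM.eq, hN.eq] using two_mul_trace_conjTranspose_mul_le M N

variable [DecidableEq n]

lemma PosSemidef.trace_mul_nonneg {M N : Matrix n n ℝ} (hM : M.PosSemidef) (hN : N.PosSemidef) :
    0 ≤ (M * N).trace := by
  have hs := (CFC.sqrt_nonneg N).posSemidef
  rw [← CFC.sqrt_mul_sqrt_self N hN.nonneg, ← Matrix.mul_assoc, trace_mul_comm,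
    ← Matrix.mul_assoc]
  nth_rw 1 [← hs.1.eq]
  exact (hM.conjTranspose_mul_mul_same _).trace_nonneg

lemma trace_mul_le_trace_mul {K K' N : Matrix n n ℝ} (hK : K ≤ K') (hN : N.PosSemidef) :
    (K * N).trace ≤ (K' * N).trace := by
  have := PosSemidef.trace_mul_nonneg hK hN
  rwa [Matrix.sub_mul, trace_sub, sub_nonneg] at this

lemma trace_mul_le_trace_of_contraction {K N : Matrix n n ℝ} (hK : Kᴴ * K ≤ 1)
    (hN : N.PosSemidef) : (K * N).trace ≤ N.trace := by
  set s := CFC.sqrt N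
  have hs : sᴴ = s := (CFC.sqrt_nonneg N).posSemidef.1.eq
  have hss : s * s = N := CFC.sqrt_mul_sqrt_self N hN.nonneg
  have hKN : (K * N).trace = (sᴴ * (K * s)).trace := by
    rw [hs, ← hss, ← Matrix.mul_assoc, trace_mul_comm]
  have hKs : ((K * s)ᴴ * (K * s)).trace ≤ N.trace :=
    calc ((K * s)ᴴ * (K * s)).trace = ((Kᴴ * K) * N).trace := by
          rw [conjTranspose_mul, hs, ← hss, Matrix.mul_assoc, trace_mul_comm]
          simp only [Matrix.mul_assoc]
      _ ≤ (1 * N).trace := trace_mul_le_trace_mul hK hN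
      _ = N.trace := by rw [Matrix.one_mul]
  have hs' : (sᴴ * s).trace = N.trace := by rw [hs, hss]
  have := two_mul_trace_conjTranspose_mul_le s (K * s)
  linarith

lemma trace_mul_mul_conjTranspose_mul_self_le {A : Matrix m n ℝ} (hA : Aᴴ * A ≤ 1)
    {P : Matrix n n ℝ} (hP : P.PosSemidef) :
    ((A * P * Aᴴ) * (A * P * Aᴴ)).trace ≤ (P * P).trace := by
  set K := Aᴴ * A
  have hPKP : (P * K * P).PosSemidef := by
    simpa only [hP.1.eq] using (posSemidef_conjTranspose_mul_self A).conjTranspose_mul_mul_same P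
  have hPP : (P * P).PosSemidef := by
    simpa only [hP.1.eq] using posSemidef_conjTranspose_mul_self P
  calc ((A * P * Aᴴ) * (A * P * Aᴴ)).trace = (K * (P * K * P)).trace := by
        simp only [K, Matrix.mul_assoc]
        rw [trace_mul_comm Aᴴ]
        simp only [Matrix.mul_assoc]
    _ ≤ (1 * (P * K * P)).trace := trace_mul_le_trace_mul hA hPKP
    _ = (K * (P * P)).trace := by rw [Matrix.one_mul, trace_mul_cycle, trace_mul_comm]
    _ ≤ (1 * (P * P)).trace := trace_mul_le_trace_mul hA hPP
    _ = (P * P).trace := by rw [Matrix.one_mul]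

theorem four_mul_trace_conjTranspose_mul_le {P R : Matrix n n ℝ} (hP : P.PosSemidef)
    (hR : R.PosSemidef) {A B : Matrix m n ℝ} (hA : Aᴴ * A ≤ 1) (hB : Bᴴ * B ≤ 1) :
    4 * ((A * P)ᴴ * (B * R)).trace ≤ (P * P).trace + (R * R).trace + 2 * (P * R).trace := by
  set p := CFC.sqrt P
  set r := CFC.sqrt R
  have hp : pᴴ = p := (CFC.sqrt_nonneg P).posSemidef.1.eq
  have hr : rᴴ = r := (CFC.sqrt_nonneg R).posSemidef.1.eq
  have hpp : p * p = P := CFC.sqrt_mul_sqrt_self P hP.nonneg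
  have hrr : r * r = R := CFC.sqrt_mul_sqrt_self R hR.nonneg
  set E := p * Aᴴ * B * r
  set F := r * p
  have hEF : ((A * P)ᴴ * (B * R)).trace = (E * F).trace := by
    rw [conjTranspose_mul, hP.1.eq, ← hpp, ← hrr]
    simp only [E, F, Matrix.mul_assoc]
    rw [trace_mul_comm p]
    simp only [Matrix.mul_assoc]
  have hFF : (Fᴴ * F).trace = (P * R).trace := by
    rw [conjTranspose_mul, hr, hp, Matrix.mul_assoc, ← Matrix.mul_assoc r, hrr, trace_mul_comm,
      Matrix.mul_assoc, hpp, trace_mul_comm]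
  have hEE : (E * Eᴴ).trace = ((B * R * Bᴴ) * (A * P * Aᴴ)).trace := by
    simp only [E, conjTranspose_mul, conjTranspose_conjTranspose, hp, hr, Matrix.mul_assoc]
    rw [← hpp, ← hrr, trace_mul_comm p]
    simp only [Matrix.mul_assoc]
    rw [trace_mul_comm Aᴴ]
    simp only [Matrix.mul_assoc]
  have hEF_le := two_mul_trace_conjTranspose_mul_le Eᴴ F
  rw [conjTranspose_conjTranspose] at hEF_le
  have hBA_le := (hR.conjTranspose_mul_mul_same Bᴴ).1.two_mul_trace_mul_le
    (hP.conjTranspose_mul_mul_same Aᴴ).1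
  simp only [conjTranspose_conjTranspose] at hBA_le
  have hA_le := trace_mul_mul_conjTranspose_mul_self_le hA hP
  have hB_le := trace_mul_mul_conjTranspose_mul_self_le hB hR
  linarith

lemma PosSemidef.mul_eq_zero_of_conjTranspose_mul_mul_eq_zero {N : Matrix n n ℝ}
    (hN : N.PosSemidef) {P : Matrix n k ℝ} (h : Pᴴ * N * P = 0) : N * P = 0 := by
  set s := CFC.sqrt N
  have hs : sᴴ = s := (CFC.sqrt_nonneg N).posSemidef.1.eq
  have hss : s * s = N := CFC.sqrt_mul_sqrt_self N hN.nonneg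
  have hsP : s * P = 0 := by
    rw [← conjTranspose_mul_self_eq_zero, conjTranspose_mul, hs, Matrix.mul_assoc,
      ← Matrix.mul_assoc s, hss, ← Matrix.mul_assoc, h]
  rw [← hss, Matrix.mul_assoc, hsP, Matrix.mul_zero]

lemma conjTranspose_mul_mul_eq_conjTranspose {A : Matrix m n ℝ} (hA : Aᴴ * A ≤ 1)
    {P : Matrix n k ℝ} (h : (A * P)ᴴ * (A * P) = Pᴴ * P) : (A * P)ᴴ * A = Pᴴ := by
  have hN : (1 - Aᴴ * A) * P = 0 := by
    refine PosSemidef.mul_eq_zero_of_conjTranspose_mul_mul_eq_zero hA ?_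
    rw [Matrix.mul_sub, Matrix.sub_mul, Matrix.mul_one, ← h, conjTranspose_mul]
    simp only [Matrix.mul_assoc, sub_self]
  have := congrArg conjTranspose hN
  rw [conjTranspose_mul, (isHermitian_one.sub (isHermitian_conjTranspose_mul_self A)).eq,
    Matrix.mul_sub, Matrix.mul_one, conjTranspose_zero, sub_eq_zero] at this
  rw [conjTranspose_mul, Matrix.mul_assoc]
  exact this.symm

theorem exists_mem_orthogonalGroup_forall_trace_mul_le (M : Matrix n n ℝ) :
    ∃ Q ∈ orthogonalGroup n ℝ, ∀ C : Matrix n n ℝ, Cᴴ * C ≤ 1 →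
      (C * M).trace ≤ (Q * M).trace := by
  have hS := (CFC.sqrt_nonneg (Mᴴ * M)).posSemidef
  obtain ⟨Q, hQ, hQM⟩ := exists_mem_orthogonalGroup_mul_eq (A := M) (B := CFC.sqrt (Mᴴ * M))
    (by rw [hS.1.eq, CFC.sqrt_mul_sqrt_self _ (posSemidef_conjTranspose_mul_self M).nonneg])
  refine ⟨Q, hQ, fun C hC => ?_⟩
  have hQQ : Qᴴ * Q = 1 := mem_unitaryGroup_iff'.mp hQ
  have hCQ : (C * Qᴴ)ᴴ * (C * Qᴴ) ≤ 1 := by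
    have := star_right_conjugate_le_conjugate hC Q
    rw [Matrix.mul_one, mem_unitaryGroup_iff.mp hQ, star_eq_conjTranspose] at this
    convert this using 1
    simp only [conjTranspose_mul, conjTranspose_conjTranspose, Matrix.mul_assoc]
  calc (C * M).trace = ((C * Qᴴ) * (Q * M)).trace := by
        rw [Matrix.mul_assoc, ← Matrix.mul_assoc Qᴴ, hQQ, Matrix.one_mul]
    _ ≤ (Q * M).trace := trace_mul_le_trace_of_contraction hCQ (hQM ▸ hS)

end Trace

lemma conjTranspose_mul_self_orthogonal_mul [DecidableEq n] {Q : Matrix n n ℝ}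
    (hQ : Q ∈ orthogonalGroup n ℝ) (Y : Matrix n k ℝ) : (Q * Y)ᴴ * (Q * Y) = Yᴴ * Y := by
  have hQQ : Qᴴ * Q = 1 := mem_unitaryGroup_iff'.mp hQ
  rw [conjTranspose_mul, Matrix.mul_assoc, ← Matrix.mul_assoc Qᴴ, hQQ, Matrix.one_mul]

end Matrix

section GramSqrt

variable {n d : ℕ}

lemma mnorm_eq_sqrt_trace {p q : ℕ} (A : Matrix (Fin p) (Fin q) ℝ) :
    mnorm A = √(Aᴴ * A).trace := by
  rw [mnorm, trace, Finset.sum_comm]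
  simp [mul_apply, sq]

theorem gramSqrt_eq_sqrt (X : Matrix (Fin n) (Fin d) ℝ) : gramSqrt X = CFC.sqrt (Xᴴ * X) := by
  have hX := posSemidef_conjTranspose_mul_self X
  rw [CFC.sqrt_eq_cfc, cfc_nnreal_eq_real _ _ hX.nonneg, hX.1.cfc_eq, IsHermitian.cfc,
    Unitary.conjStarAlgAut_apply, gramSqrt]
  congr 3
  ext i
  simp only [Function.comp_apply, Real.coe_sqrt, Real.coe_toNNReal']
  exact congrArg _ (max_eq_left (hX.eigenvalues_nonneg i)).symm

lemma posSemidef_gramSqrt (X : Matrix (Fin n) (Fin d) ℝ) : (gramSqrt X).PosSemidef :=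
  gramSqrt_eq_sqrt X ▸ (CFC.sqrt_nonneg _).posSemidef

lemma gramSqrt_mul_self (X : Matrix (Fin n) (Fin d) ℝ) : gramSqrt X * gramSqrt X = Xᴴ * X := by
  rw [gramSqrt_eq_sqrt, CFC.sqrt_mul_sqrt_self _ (posSemidef_conjTranspose_mul_self X).nonneg]

lemma conjTranspose_gramSqrt_mul_self (X : Matrix (Fin n) (Fin d) ℝ) :
    (gramSqrt X)ᴴ * gramSqrt X = Xᴴ * X := by
  rw [(posSemidef_gramSqrt X).1.eq, gramSqrt_mul_self]

lemma gramSqrt_orthogonal_mul {Q : Matrix (Fin n) (Fin n) ℝ} (hQ : Q ∈ orthogonalGroup (Fin n) ℝ)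
    (Y : Matrix (Fin n) (Fin d) ℝ) : gramSqrt (Q * Y) = gramSqrt Y := by
  rw [gramSqrt_eq_sqrt, gramSqrt_eq_sqrt, conjTranspose_mul_self_orthogonal_mul hQ]

theorem mnorm_gramSqrt_sub_le (X Y : Matrix (Fin n) (Fin d) ℝ) :
    mnorm (gramSqrt X - gramSqrt Y) ≤ √2 * mnorm (X - Y) := by
  obtain ⟨A, hA, hAX⟩ := exists_contraction_mul_eq (conjTranspose_gramSqrt_mul_self X).ge
  obtain ⟨B, hB, hBY⟩ := exists_contraction_mul_eq (conjTranspose_gramSqrt_mul_self Y).ge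
  have key := four_mul_trace_conjTranspose_mul_le (posSemidef_gramSqrt X) (posSemidef_gramSqrt Y)
    hA hB
  rw [hAX, hBY, gramSqrt_mul_self, gramSqrt_mul_self] at key
  rw [mnorm_eq_sqrt_trace, mnorm_eq_sqrt_trace, ← Real.sqrt_mul zero_le_two]
  refine Real.sqrt_le_sqrt ?_
  rw [trace_conjTranspose_sub_mul_sub, trace_conjTranspose_sub_mul_sub,
    conjTranspose_gramSqrt_mul_self, conjTranspose_gramSqrt_mul_self,
    (posSemidef_gramSqrt X).1.eq]
  linarith

theorem exists_mem_orthogonalGroup_mnorm_sub_le (X Y : Matrix (Fin n) (Fin d) ℝ) :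
    ∃ Q ∈ orthogonalGroup (Fin n) ℝ, mnorm (X - Q * Y) ≤ mnorm (gramSqrt X - gramSqrt Y) := by
  set P := gramSqrt X
  set R := gramSqrt Y
  obtain ⟨A, hA, hAX⟩ := exists_contraction_mul_eq (conjTranspose_gramSqrt_mul_self X).ge
  have hXA : Xᴴ * A = Pᴴ := hAX ▸ conjTranspose_mul_mul_eq_conjTranspose hA
    (by rw [hAX, conjTranspose_gramSqrt_mul_self])
  obtain ⟨C, hC, hCY⟩ := exists_contraction_mul_eq (A := Y) (B := A * R) (by
    have := star_left_conjugate_le_conjugate hA R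
    rwa [Matrix.mul_one, star_eq_conjTranspose, ← Matrix.mul_assoc, ← conjTranspose_mul,
      Matrix.mul_assoc, conjTranspose_gramSqrt_mul_self] at this)
  obtain ⟨Q, hQ, hmax⟩ := exists_mem_orthogonalGroup_forall_trace_mul_le (Y * Xᴴ)
  refine ⟨Q, hQ, ?_⟩
  have key : (Pᴴ * R).trace ≤ (Xᴴ * (Q * Y)).trace :=
    calc (Pᴴ * R).trace = (C * (Y * Xᴴ)).trace := by
          rw [← hXA, Matrix.mul_assoc, ← hCY, trace_mul_comm, Matrix.mul_assoc]
      _ ≤ (Q * (Y * Xᴴ)).trace := hmax C hC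
      _ = (Xᴴ * (Q * Y)).trace := by rw [← Matrix.mul_assoc, trace_mul_comm]
  rw [mnorm_eq_sqrt_trace, mnorm_eq_sqrt_trace]
  refine Real.sqrt_le_sqrt ?_
  rw [trace_conjTranspose_sub_mul_sub, trace_conjTranspose_sub_mul_sub,
    conjTranspose_mul_self_orthogonal_mul hQ, conjTranspose_gramSqrt_mul_self,
    conjTranspose_gramSqrt_mul_self]
  linarith

end GramSqrt

theorem gramSqrt_biLipschitz_general
    (n d : ℕ) (X Y : Matrix (Fin n) (Fin d) ℝ) :
    (⨅ Q : Matrix.orthogonalGroup (Fin n) ℝ,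
        mnorm (X - (Q : Matrix (Fin n) (Fin n) ℝ) * Y)) ≤
      mnorm (gramSqrt X - gramSqrt Y) ∧
    mnorm (gramSqrt X - gramSqrt Y) ≤
      Real.sqrt 2 * ⨅ Q : Matrix.orthogonalGroup (Fin n) ℝ,
        mnorm (X - (Q : Matrix (Fin n) (Fin n) ℝ) * Y) := by
  have hbdd : BddBelow (Set.range fun Q : orthogonalGroup (Fin n) ℝ =>
      mnorm (X - (Q : Matrix (Fin n) (Fin n) ℝ) * Y)) :=
    ⟨0, by rintro _ ⟨Q, rfl⟩; exact Real.sqrt_nonneg _⟩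
  constructor
  · obtain ⟨Q, hQ, hle⟩ := exists_mem_orthogonalGroup_mnorm_sub_le X Y
    exact (ciInf_le hbdd ⟨Q, hQ⟩).trans hle
  · rw [Real.mul_iInf_of_nonneg (Real.sqrt_nonneg 2)]
    refine le_ciInf fun Q => ?_
    have := mnorm_gramSqrt_sub_le X ((Q : Matrix (Fin n) (Fin n) ℝ) * Y)
    rwa [gramSqrt_orthogonal_mul Q.2] at this

/-- Derksen: for all real `n × d` matrices `X, Y`,
`min_{Q ∈ O(n)} ‖X − QY‖_F ≤ ‖√(XᵀX) − √(YᵀY)‖_F ≤ √2 · min_{Q ∈ O(n)} ‖X − QY‖_F`. -/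
theorem gramSqrt_biLipschitz
    (n d : ℕ) (hn : 0 < n) (hd : 0 < d) (X Y : Matrix (Fin n) (Fin d) ℝ) :
    (⨅ Q : Matrix.orthogonalGroup (Fin n) ℝ,
        mnorm (X - (Q : Matrix (Fin n) (Fin n) ℝ) * Y)) ≤
      mnorm (gramSqrt X - gramSqrt Y) ∧
    mnorm (gramSqrt X - gramSqrt Y) ≤
      Real.sqrt 2 * ⨅ Q : Matrix.orthogonalGroup (Fin n) ℝ,
        mnorm (X - (Q : Matrix (Fin n) (Fin n) ℝ) * Y) :=
  gramSqrt_biLipschitz_general n d X Y
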